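/- arXiv:2002.10396 — 3 statements merged into one kernel-verified Lean document; each statement's English description precedes it below -/
import Mathlib

section
/- Let p ∈ (1,∞) and let X be a real Banach space that satisfies the hypercube Stein inequality with constant 𝔰 for exponent p and the hypercube UMD⁻ inequality with constant β for exponent p. Then for every positive integer n and every function f : 𝒞_n → X, one has ‖f − 2^{−n} Σ_{δ∈𝒞_n} f(δ)‖_{L_p(𝒞_n;X)} ≤ 𝔰 β (2^{−n} Σ_{δ∈𝒞_n} ‖Σ_{i=1}^n δ_i ∂_i f‖_{L_p(𝒞_n;X)}^p)^{1/p}; that is, Pisier's inequality holds for X with a constant 𝔰β independent of the dimension n. -/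
noncomputable section

open Finset

/-- The sign `±1` attached to a boolean coordinate of the discrete cube. -/
def sgn (b : Bool) : ℝ := if b then 1 else -1

variable {X : Type*} [NormedAddCommGroup X] [NormedSpace ℝ X]

/-- `L_p` norm of `f : 𝒞_n → X` with respect to the uniform probability measure. -/
def cubeLpNorm (n : ℕ) (p : ℝ) (f : (Fin n → Bool) → X) : ℝ :=
  (((2 : ℝ) ^ n)⁻¹ * ∑ ε : Fin n → Bool, ‖f ε‖ ^ p) ^ (1 / p)

/-- Conditional expectation given the coordinates in `S`: average of `f η` over all
`η` agreeing with `ε` on `S`. -/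
def cubeCondExp (n : ℕ) (S : Finset (Fin n)) (f : (Fin n → Bool) → X) :
    (Fin n → Bool) → X := fun ε =>
  ((2 : ℝ) ^ (n - S.card))⁻¹ •
    ∑ η ∈ univ.filter (fun η : Fin n → Bool => ∀ j ∈ S, η j = ε j), f η

/-- The set of the first `i` coordinates (`0`-based). -/
def firstIdx (n i : ℕ) : Finset (Fin n) := univ.filter fun j => (j : ℕ) < i

/-- `𝔈_i`: conditioning on the first `i` coordinates. -/
def Ei (n i : ℕ) (f : (Fin n → Bool) → X) : (Fin n → Bool) → X :=
  cubeCondExp n (firstIdx n i) f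

/-- `𝔈_i^π`: conditioning on the coordinates `π(1),…,π(i)`. -/
def Epi (n : ℕ) (π : Equiv.Perm (Fin n)) (i : ℕ) (f : (Fin n → Bool) → X) :
    (Fin n → Bool) → X :=
  cubeCondExp n ((firstIdx n i).image π) f

/-- `∂_i`: the `i`-th discrete partial derivative. -/
def cubeDeriv (n : ℕ) (i : Fin n) (f : (Fin n → Bool) → X) : (Fin n → Bool) → X :=
  fun ε => (2 : ℝ)⁻¹ • (f ε - f (Function.update ε i (!(ε i))))

/-- `X` satisfies the hypercube Stein inequality with constant `s` for exponent `p`. -/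
def SteinIneq (X : Type*) [NormedAddCommGroup X] [NormedSpace ℝ X] (p s : ℝ) : Prop :=
  ∀ m : ℕ, 0 < m → ∀ (π : Equiv.Perm (Fin m)) (g : Fin m → (Fin m → Bool) → X),
    (((2 : ℝ) ^ m)⁻¹ * ∑ δ : Fin m → Bool,
        (cubeLpNorm m p fun ε => ∑ i : Fin m, sgn (δ i) • Epi m π ((i : ℕ) + 1) (g i) ε) ^ p) ^ (1 / p)
      ≤ s * (((2 : ℝ) ^ m)⁻¹ * ∑ δ : Fin m → Bool,
        (cubeLpNorm m p fun ε => ∑ i : Fin m, sgn (δ i) • g i ε) ^ p) ^ (1 / p)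

/-- `X` satisfies the hypercube UMD⁻ inequality with constant `b` for exponent `p`. -/
def UMDminusIneq (X : Type*) [NormedAddCommGroup X] [NormedSpace ℝ X] (p b : ℝ) : Prop :=
  ∀ m : ℕ, 0 < m → ∀ (π : Equiv.Perm (Fin m)) (d : Fin m → (Fin m → Bool) → X),
    (∀ i : Fin m, Epi m π ((i : ℕ) + 1) (d i) = d i ∧ Epi m π (i : ℕ) (d i) = 0) →
    cubeLpNorm m p (fun ε => ∑ i : Fin m, d i ε)
      ≤ b * (((2 : ℝ) ^ m)⁻¹ * ∑ δ : Fin m → Bool,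
        (cubeLpNorm m p fun ε => ∑ i : Fin m, sgn (δ i) • d i ε) ^ p) ^ (1 / p)

/-- The Walsh function `w_A`. -/
def walsh (n : ℕ) (A : Finset (Fin n)) (ε : Fin n → Bool) : ℝ := ∏ i ∈ A, sgn (ε i)

/-- The Walsh coefficient `f̂(A)`. -/
def walshCoeff (n : ℕ) (f : (Fin n → Bool) → X) (A : Finset (Fin n)) : X :=
  ((2 : ℝ) ^ n)⁻¹ • ∑ ε : Fin n → Bool, walsh n A ε • f ε

/-- `Δ⁻¹∂_i f = Σ_{A ∋ i} |A|⁻¹ f̂(A) w_A`. -/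
def invLapDeriv (n : ℕ) (i : Fin n) (f : (Fin n → Bool) → X) : (Fin n → Bool) → X :=
  fun ε => ∑ A ∈ univ.filter (fun A : Finset (Fin n) => i ∈ A),
    ((A.card : ℝ)⁻¹ * walsh n A ε) • walshCoeff n f A

/-! The differences `dᵢ = 𝔼ᵢ f − 𝔼ᵢ₋₁ f` along the coordinate filtration are martingale
differences summing to `f − 𝔼f`, so UMD⁻ bounds `‖f − 𝔼f‖_p` by their Rademacher average.
Since `𝔼ᵢ₋₁` averages `𝔼ᵢ f` over the flip of coordinate `i`, one has `dᵢ = 𝔼ᵢ ∂ᵢ f`, and the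
Stein inequality removes the conditional expectations. Both inequalities are used with the
identity permutation. -/

variable {n : ℕ}

def flipAt (i : Fin n) (ε : Fin n → Bool) : Fin n → Bool := Function.update ε i (!(ε i))

lemma flipAt_flipAt (i : Fin n) (ε : Fin n → Bool) : flipAt i (flipAt i ε) = ε := by
  simp [flipAt]

@[simp]
lemma flipAt_apply_self (i : Fin n) (ε : Fin n → Bool) : flipAt i ε i = !ε i := by
  simp [flipAt]

lemma flipAt_apply_of_ne {i j : Fin n} (hji : j ≠ i) (ε : Fin n → Bool) : flipAt i ε j = ε j :=
  Function.update_of_ne hji _ _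

lemma flipAt_apply_eq_iff (i j : Fin n) (ε η : Fin n → Bool) :
    flipAt i η j = flipAt i ε j ↔ η j = ε j := by
  rcases eq_or_ne j i with rfl | hji
  · simp
  · simp [flipAt_apply_of_ne hji]

def cubeFiber (S : Finset (Fin n)) (ε : Fin n → Bool) : Finset (Fin n → Bool) :=
  univ.filter fun η => ∀ j ∈ S, η j = ε j

lemma cubeCondExp_eq_sum_cubeFiber (S : Finset (Fin n)) (f : (Fin n → Bool) → X)
    (ε : Fin n → Bool) :
    cubeCondExp n S f ε = ((2 : ℝ) ^ (n - #S))⁻¹ • ∑ η ∈ cubeFiber S ε, f η := rfl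

lemma mem_cubeFiber {S : Finset (Fin n)} {ε η : Fin n → Bool} :
    η ∈ cubeFiber S ε ↔ ∀ j ∈ S, η j = ε j := by
  simp [cubeFiber]

lemma flipAt_mem_cubeFiber {S : Finset (Fin n)} {i : Fin n} {ε η : Fin n → Bool} :
    flipAt i η ∈ cubeFiber S (flipAt i ε) ↔ η ∈ cubeFiber S ε := by
  simp [mem_cubeFiber, flipAt_apply_eq_iff]

lemma card_cubeFiber (S : Finset (Fin n)) (ε : Fin n → Bool) :
    #(cubeFiber S ε) = 2 ^ (n - #S) := by
  have h : cubeFiber S ε = Fintype.piFinset fun j => if j ∈ S then {ε j} else univ := by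
    ext η
    simp only [mem_cubeFiber, Fintype.mem_piFinset]
    refine forall_congr' fun j => ?_
    by_cases hj : j ∈ S <;> simp [hj]
  rw [h, Fintype.card_piFinset]
  have hcard : ∀ j, #(if j ∈ S then {ε j} else univ) = if j ∈ S then 1 else 2 := fun j => by
    split_ifs <;> simp
  simp_rw [hcard]
  rw [prod_ite, prod_const_one, one_mul, prod_const]
  congr 1
  simp [filter_not, card_univ_sdiff]

lemma cubeFiber_congr {S : Finset (Fin n)} {ε ε' : Fin n → Bool} (h : ∀ j ∈ S, ε j = ε' j) :
    cubeFiber S ε = cubeFiber S ε' := by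
  ext η
  simp only [mem_cubeFiber]
  exact forall₂_congr fun j hj => by rw [h j hj]

lemma cubeFiber_erase {S : Finset (Fin n)} {i : Fin n} (hi : i ∈ S) (ε : Fin n → Bool) :
    cubeFiber (S.erase i) ε = cubeFiber S ε ∪ cubeFiber S (flipAt i ε) := by
  ext η
  simp only [mem_union, mem_cubeFiber]
  constructor
  · intro h
    rcases Bool.eq_or_eq_not (η i) (ε i) with hηi | hηi
    · left
      intro j hj
      rcases eq_or_ne j i with rfl | hji
      · exact hηi
      · exact h j (mem_erase.2 ⟨hji, hj⟩)
    · right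
      intro j hj
      rcases eq_or_ne j i with rfl | hji
      · simp [hηi]
      · rw [flipAt_apply_of_ne hji]; exact h j (mem_erase.2 ⟨hji, hj⟩)
  · rintro (h | h) j hj
    · exact h j (mem_of_mem_erase hj)
    · rw [h j (mem_of_mem_erase hj), flipAt_apply_of_ne (ne_of_mem_erase hj)]

lemma disjoint_cubeFiber_flipAt {S : Finset (Fin n)} {i : Fin n} (hi : i ∈ S)
    (ε : Fin n → Bool) :
    Disjoint (cubeFiber S ε) (cubeFiber S (flipAt i ε)) := by
  rw [disjoint_left]
  intro η h1 h2
  have := (mem_cubeFiber.1 h2 i hi).symm.trans (mem_cubeFiber.1 h1 i hi)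
  simp at this

section condExp

variable (S : Finset (Fin n)) (f : (Fin n → Bool) → X)

lemma cubeCondExp_congr {ε ε' : Fin n → Bool} (h : ∀ j ∈ S, ε j = ε' j) :
    cubeCondExp n S f ε = cubeCondExp n S f ε' := by
  simp only [cubeCondExp_eq_sum_cubeFiber, cubeFiber_congr h]

lemma cubeCondExp_sub (g : (Fin n → Bool) → X) :
    cubeCondExp n S (f - g) = cubeCondExp n S f - cubeCondExp n S g := by
  ext ε
  simp [cubeCondExp_eq_sum_cubeFiber, sum_sub_distrib, smul_sub]

lemma cubeCondExp_smul (c : ℝ) : cubeCondExp n S (c • f) = c • cubeCondExp n S f := by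
  ext ε
  simp [cubeCondExp_eq_sum_cubeFiber, ← smul_sum, smul_comm c]

lemma cubeCondExp_of_subset {T : Finset (Fin n)} (hST : S ⊆ T)
    (hf : ∀ ε η : Fin n → Bool, (∀ j ∈ S, η j = ε j) → f η = f ε) :
    cubeCondExp n T f = f := by
  ext ε
  have hconst : ∀ η ∈ cubeFiber T ε, f η = f ε := fun η hη =>
    hf ε η fun j hj => mem_cubeFiber.1 hη j (hST hj)
  rw [cubeCondExp_eq_sum_cubeFiber, sum_congr rfl hconst, sum_const, card_cubeFiber,
    ← Nat.cast_smul_eq_nsmul ℝ, smul_smul]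
  push_cast
  rw [inv_mul_cancel₀ (by positivity), one_smul]

lemma cubeCondExp_cubeCondExp_of_subset {T : Finset (Fin n)} (hST : S ⊆ T) :
    cubeCondExp n T (cubeCondExp n S f) = cubeCondExp n S f :=
  cubeCondExp_of_subset S _ hST fun _ _ h => cubeCondExp_congr S f h

lemma cubeCondExp_comp_flipAt (i : Fin n) (ε : Fin n → Bool) :
    cubeCondExp n S (f ∘ flipAt i) ε = cubeCondExp n S f (flipAt i ε) := by
  simp only [cubeCondExp_eq_sum_cubeFiber]
  congr 1
  refine sum_nbij' (flipAt i) (flipAt i) (fun η hη => ?_) (fun η hη => ?_)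
    (fun η _ => flipAt_flipAt i η) (fun η _ => flipAt_flipAt i η) (fun η _ => rfl)
  · exact flipAt_mem_cubeFiber.2 hη
  · exact flipAt_mem_cubeFiber.1 (by rwa [flipAt_flipAt])

lemma cubeCondExp_erase {i : Fin n} (hi : i ∈ S) (ε : Fin n → Bool) :
    cubeCondExp n (S.erase i) f ε
      = (2 : ℝ)⁻¹ • (cubeCondExp n S f ε + cubeCondExp n S f (flipAt i ε)) := by
  have hcard : n - #(S.erase i) = n - #S + 1 := by
    have hS : #S ≤ n := by simpa using card_le_univ S
    have := card_pos.2 ⟨i, hi⟩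
    rw [card_erase_of_mem hi]
    omega
  simp only [cubeCondExp_eq_sum_cubeFiber, cubeFiber_erase hi,
    sum_union (disjoint_cubeFiber_flipAt hi ε), hcard, smul_add, smul_smul, pow_succ, mul_inv]
  rw [mul_comm]

lemma cubeCondExp_erase_cubeCondExp {i : Fin n} (hi : i ∈ S) :
    cubeCondExp n (S.erase i) (cubeCondExp n S f) = cubeCondExp n (S.erase i) f := by
  ext ε
  rw [cubeCondExp_erase S _ hi, cubeCondExp_cubeCondExp_of_subset S f subset_rfl,
    ← cubeCondExp_erase S f hi]

lemma cubeCondExp_cubeDeriv {i : Fin n} (hi : i ∈ S) :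
    cubeCondExp n S (cubeDeriv n i f) = cubeCondExp n S f - cubeCondExp n (S.erase i) f := by
  ext ε
  have hderiv : cubeDeriv n i f = (2 : ℝ)⁻¹ • (f - f ∘ flipAt i) := rfl
  rw [hderiv, cubeCondExp_smul, cubeCondExp_sub, Pi.smul_apply, Pi.sub_apply,
    cubeCondExp_comp_flipAt, Pi.sub_apply, cubeCondExp_erase S f hi]
  module

lemma cubeCondExp_univ : cubeCondExp n univ f = f := by
  ext ε
  have hfiber : cubeFiber univ ε = {ε} := by
    ext η
    simp [mem_cubeFiber, funext_iff]
  simp [cubeCondExp_eq_sum_cubeFiber, hfiber]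

lemma cubeCondExp_empty (ε : Fin n → Bool) :
    cubeCondExp n ∅ f ε = ((2 : ℝ) ^ n)⁻¹ • ∑ δ, f δ := by
  simp [cubeCondExp_eq_sum_cubeFiber, cubeFiber]

end condExp

lemma firstIdx_zero : firstIdx n 0 = ∅ := by
  ext j; simp [firstIdx]

lemma firstIdx_self : firstIdx n n = univ := by
  ext j; simp [firstIdx]

lemma firstIdx_mono {i k : ℕ} (h : i ≤ k) : firstIdx n i ⊆ firstIdx n k := by
  intro j
  simp only [firstIdx, mem_filter, mem_univ, true_and]
  omega

lemma mem_firstIdx_succ (i : Fin n) : i ∈ firstIdx n (i + 1) := by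
  simp [firstIdx]

lemma erase_firstIdx_succ (i : Fin n) : (firstIdx n (i + 1)).erase i = firstIdx n i := by
  ext j
  simp only [firstIdx, mem_erase, mem_filter, mem_univ, true_and, ne_eq, ← Fin.val_inj]
  omega

lemma Epi_one (i : ℕ) (f : (Fin n → Bool) → X) : Epi n 1 i f = Ei n i f := by
  simp [Epi, Ei]

lemma Ei_sub (i : ℕ) (f g : (Fin n → Bool) → X) : Ei n i (f - g) = Ei n i f - Ei n i g :=
  cubeCondExp_sub _ f g

lemma Ei_succ_cubeDeriv (i : Fin n) (f : (Fin n → Bool) → X) :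
    Ei n (i + 1) (cubeDeriv n i f) = Ei n (i + 1) f - Ei n i f := by
  rw [Ei, cubeCondExp_cubeDeriv _ _ (mem_firstIdx_succ i), erase_firstIdx_succ]
  rfl

lemma Ei_Ei_of_le {i k : ℕ} (h : i ≤ k) (f : (Fin n → Bool) → X) :
    Ei n k (Ei n i f) = Ei n i f :=
  cubeCondExp_cubeCondExp_of_subset _ f (firstIdx_mono h)

lemma Ei_Ei_succ (i : Fin n) (f : (Fin n → Bool) → X) : Ei n i (Ei n (i + 1) f) = Ei n i f := by
  simp only [Ei, ← erase_firstIdx_succ i, cubeCondExp_erase_cubeCondExp _ f (mem_firstIdx_succ i)]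

lemma Ei_succ_sub_Ei_isMartingaleDiff (i : Fin n) (f : (Fin n → Bool) → X) :
    Ei n (i + 1) (Ei n (i + 1) f - Ei n i f) = Ei n (i + 1) f - Ei n i f ∧
      Ei n i (Ei n (i + 1) f - Ei n i f) = 0 := by
  constructor
  · rw [Ei_sub, Ei_Ei_of_le le_rfl, Ei_Ei_of_le (Nat.le_succ _)]
  · rw [Ei_sub, Ei_Ei_succ, Ei_Ei_of_le le_rfl, sub_self]

lemma sum_Ei_succ_sub_Ei (f : (Fin n → Bool) → X) (ε : Fin n → Bool) :
    ∑ i : Fin n, (Ei n (i + 1) f ε - Ei n i f ε) = f ε - ((2 : ℝ) ^ n)⁻¹ • ∑ δ, f δ := by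
  rw [Fin.sum_univ_eq_sum_range (fun k => Ei n (k + 1) f ε - Ei n k f ε),
    sum_range_sub (fun k => Ei n k f ε), Ei, firstIdx_self, cubeCondExp_univ, Ei, firstIdx_zero,
    cubeCondExp_empty]

theorem pisier_inequality_umd_general (p s b : ℝ) (hb : 0 < b)
    (X : Type*) [NormedAddCommGroup X] [NormedSpace ℝ X]
    (hStein : SteinIneq X p s) (hUMD : UMDminusIneq X p b)
    (n : ℕ) (hn : 0 < n) (f : (Fin n → Bool) → X) :
    cubeLpNorm n p (fun ε => f ε - ((2 : ℝ) ^ n)⁻¹ • ∑ δ : Fin n → Bool, f δ)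
      ≤ s * b * (((2 : ℝ) ^ n)⁻¹ * ∑ δ : Fin n → Bool,
          (cubeLpNorm n p fun ε =>
            ∑ i : Fin n, sgn (δ i) • cubeDeriv n i f ε) ^ p) ^ (1 / p) := by
  have hUMD' := hUMD n hn 1 (fun i => Ei n (i + 1) f - Ei n i f) fun i => by
    simpa only [Epi_one] using Ei_succ_sub_Ei_isMartingaleDiff i f
  have hStein' := hStein n hn 1 fun i => cubeDeriv n i f
  simp only [Pi.sub_apply, sum_Ei_succ_sub_Ei] at hUMD'
  simp only [Epi_one, Ei_succ_cubeDeriv, Pi.sub_apply] at hStein'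
  calc _ ≤ _ := hUMD'
    _ ≤ b * (s * _) := mul_le_mul_of_nonneg_left hStein' hb.le
    _ = _ := by ring

/-- **Pisier's inequality with dimension-free constant** for Banach spaces satisfying the
hypercube Stein and UMD⁻ inequalities: `‖f − 𝔼f‖_p ≤ s·b·(2⁻ⁿ Σ_δ ‖Σᵢ δᵢ∂ᵢf‖_p^p)^{1/p}`. -/
theorem pisier_inequality_umd (p s b : ℝ) (hp : 1 < p) (hs : 0 < s) (hb : 0 < b)
    (X : Type*) [NormedAddCommGroup X] [NormedSpace ℝ X] [CompleteSpace X]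
    (hStein : SteinIneq X p s) (hUMD : UMDminusIneq X p b)
    (n : ℕ) (hn : 0 < n) (f : (Fin n → Bool) → X) :
    cubeLpNorm n p (fun ε => f ε - ((2 : ℝ) ^ n)⁻¹ • ∑ δ : Fin n → Bool, f δ)
      ≤ s * b * (((2 : ℝ) ^ n)⁻¹ * ∑ δ : Fin n → Bool,
          (cubeLpNorm n p fun ε =>
            ∑ i : Fin n, sgn (δ i) • cubeDeriv n i f ε) ^ p) ^ (1 / p) :=
  pisier_inequality_umd_general p s b hb X hStein hUMD n hn f
end
end

section
/- Let p ∈ (1,∞) and let X be a real Banach space that satisfies the hypercube Stein inequality with constant 𝔰 for exponent p and the hypercube UMD⁻ inequality with constant β for exponent p. Then for every positive integer n, every permutation π of {1,…,n}, and all functions f_1,…,f_n : 𝒞_n → X, one has ‖Σ_{i=1}^n 𝔈_i^π ∂_{π(i)} f_{π(i)}‖_{L_p(𝒞_n;X)} ≤ 𝔰 β (2^{−n} Σ_{δ∈𝒞_n} ‖Σ_{i=1}^n δ_i ∂_i f_i‖_{L_p(𝒞_n;X)}^p)^{1/p}. -/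
noncomputable section

open Finset

variable {X : Type*} [NormedAddCommGroup X] [NormedSpace ℝ X]

lemma card_agree (n : ℕ) (T : Finset (Fin n)) (ζ : Fin n → Bool) :
    (univ.filter (fun η : Fin n → Bool => ∀ j ∈ T, η j = ζ j)).card = 2 ^ (n - T.card) := by
  have h : (univ.filter (fun η : Fin n → Bool => ∀ j ∈ T, η j = ζ j)).card
      = (univ : Finset ({j : Fin n // j ∈ Tᶜ} → Bool)).card := by
    refine Finset.card_bij' (fun η _ => fun j => η j.1)
      (fun g _ => fun k => if h : k ∈ T then ζ k else g ⟨k, by simp [h]⟩)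
      (fun _ _ => Finset.mem_univ _) ?_ ?_ ?_
    · intro g _
      simp only [Finset.mem_filter, Finset.mem_univ, true_and]
      intro j hj
      simp [hj]
    · intro η hη
      simp only [Finset.mem_filter, Finset.mem_univ, true_and] at hη
      funext k
      by_cases hk : k ∈ T
      · simp [hk, hη k hk]
      · simp [hk]
    · intro g _
      funext j
      have : j.1 ∉ T := Finset.mem_compl.mp j.2
      simp [this]
  rw [h, Finset.card_univ, Fintype.card_fun]
  simp [Finset.card_compl]

lemma condExp_condExp (n : ℕ) {S T : Finset (Fin n)} (hST : S ⊆ T) (f : (Fin n → Bool) → X) :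
    cubeCondExp n S (cubeCondExp n T f) = cubeCondExp n S f := by
  funext ε
  unfold cubeCondExp
  rw [← Finset.smul_sum]
  congr 1
  have hswap :
      (∑ η ∈ univ.filter (fun η : Fin n → Bool => ∀ j ∈ S, η j = ε j),
        ∑ ζ ∈ univ.filter (fun ζ : Fin n → Bool => ∀ j ∈ T, ζ j = η j), f ζ)
      = ∑ ζ ∈ univ.filter (fun ζ : Fin n → Bool => ∀ j ∈ S, ζ j = ε j),
        ∑ _η ∈ univ.filter (fun η : Fin n → Bool => ∀ j ∈ T, η j = ζ j), f ζ := by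
    refine Finset.sum_comm' ?_
    intro η ζ
    simp only [Finset.mem_filter, Finset.mem_univ, true_and]
    constructor
    · rintro ⟨h1, h2⟩
      refine ⟨fun j hj => (h2 j hj).symm, fun j hj => by rw [h2 j (hST hj), h1 j hj]⟩
    · rintro ⟨h1, h2⟩
      refine ⟨fun j hj => by rw [h1 j (hST hj), h2 j hj], fun j hj => (h1 j hj).symm⟩
  have : ∀ ζ ∈ univ.filter (fun ζ : Fin n → Bool => ∀ j ∈ S, ζ j = ε j),
      (∑ _η ∈ univ.filter (fun η : Fin n → Bool => ∀ j ∈ T, η j = ζ j), f ζ)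
      = ((2:ℝ) ^ (n - T.card)) • f ζ := by
    intro ζ _
    rw [Finset.sum_const, card_agree]
    rw [← Nat.cast_smul_eq_nsmul ℝ]
    norm_num
  rw [hswap, Finset.sum_congr rfl this, ← Finset.smul_sum, smul_smul]
  have h2 : ((2:ℝ) ^ (n - T.card)) ≠ 0 := by positivity
  rw [inv_mul_cancel₀ h2, one_smul]

lemma condExp_deriv_eq_zero (n : ℕ) {S : Finset (Fin n)} {i : Fin n} (hi : i ∉ S)
    (f : (Fin n → Bool) → X) : cubeCondExp n S (cubeDeriv n i f) = 0 := by
  funext ε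
  unfold cubeCondExp cubeDeriv
  simp only [Pi.zero_apply, smul_sub]
  rw [Finset.sum_sub_distrib]
  have key : (∑ η ∈ univ.filter (fun η : Fin n → Bool => ∀ j ∈ S, η j = ε j),
        (2:ℝ)⁻¹ • f (Function.update η i (!(η i))))
      = ∑ η ∈ univ.filter (fun η : Fin n → Bool => ∀ j ∈ S, η j = ε j), (2:ℝ)⁻¹ • f η := by
    refine Finset.sum_nbij' (fun η => Function.update η i (!(η i)))
      (fun η => Function.update η i (!(η i))) ?_ ?_ ?_ ?_ ?_
    · intro η hη
      simp only [Finset.mem_filter, Finset.mem_univ, true_and] at hη ⊢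
      intro j hj
      rw [Function.update_of_ne (ne_of_mem_of_not_mem hj hi)]
      exact hη j hj
    · intro η hη
      simp only [Finset.mem_filter, Finset.mem_univ, true_and] at hη ⊢
      intro j hj
      rw [Function.update_of_ne (ne_of_mem_of_not_mem hj hi)]
      exact hη j hj
    · intro η _
      simp [Function.update_idem, Function.update_self]
    · intro η _
      simp [Function.update_idem, Function.update_self]
    · intro η _
      rfl
  rw [key, sub_self, smul_zero]
/-- The permuted form of the main theorem:
`‖Σᵢ 𝔈ᵢ^π ∂_{π(i)} f_{π(i)}‖_p ≤ s·b·(2⁻ⁿ Σ_δ ‖Σᵢ δᵢ∂ᵢfᵢ‖_p^p)^{1/p}`. -/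
theorem pisier_umd_permuted (p s b : ℝ) (hp : 1 < p) (hs : 0 < s) (hb : 0 < b)
    (X : Type*) [NormedAddCommGroup X] [NormedSpace ℝ X] [CompleteSpace X]
    (hStein : SteinIneq X p s) (hUMD : UMDminusIneq X p b)
    (n : ℕ) (hn : 0 < n) (π : Equiv.Perm (Fin n)) (f : Fin n → (Fin n → Bool) → X) :
    cubeLpNorm n p
        (fun ε => ∑ i : Fin n, Epi n π ((i : ℕ) + 1) (cubeDeriv n (π i) (f (π i))) ε)
      ≤ s * b * (((2 : ℝ) ^ n)⁻¹ * ∑ δ : Fin n → Bool,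
          (cubeLpNorm n p fun ε =>
            ∑ i : Fin n, sgn (δ i) • cubeDeriv n i (f i) ε) ^ p) ^ (1 / p) := by
  have hsub : ∀ i : Fin n, (firstIdx n i).image π ⊆ (firstIdx n ((i:ℕ)+1)).image π := by
    intro i
    apply Finset.image_subset_image
    intro j hj
    simp only [firstIdx, Finset.mem_filter, Finset.mem_univ, true_and] at hj ⊢
    omega
  have hnotmem : ∀ i : Fin n, π i ∉ (firstIdx n i).image π := by
    intro i hmem
    rw [Finset.mem_image] at hmem
    obtain ⟨a, ha, hpa⟩ := hmem
    have h2 : a = i := π.injective hpa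
    subst h2
    simp [firstIdx] at ha
  have hdcond : ∀ i : Fin n,
      Epi n π ((i : ℕ) + 1)
          (Epi n π ((i : ℕ) + 1) (cubeDeriv n (π i) (f (π i))))
        = Epi n π ((i : ℕ) + 1) (cubeDeriv n (π i) (f (π i)))
      ∧ Epi n π (i : ℕ)
          (Epi n π ((i : ℕ) + 1) (cubeDeriv n (π i) (f (π i)))) = 0 := by
    intro i
    constructor
    · exact condExp_condExp n (le_refl _) _
    · have h1 : Epi n π (i:ℕ) (Epi n π ((i : ℕ) + 1) (cubeDeriv n (π i) (f (π i))))
          = Epi n π (i:ℕ) (cubeDeriv n (π i) (f (π i))) :=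
        condExp_condExp n (hsub i) _
      rw [h1]
      exact condExp_deriv_eq_zero n (hnotmem i) (f (π i))
  have hU := hUMD n hn π
    (fun i => Epi n π ((i : ℕ) + 1) (cubeDeriv n (π i) (f (π i)))) hdcond
  have hS := hStein n hn π (fun i => cubeDeriv n (π i) (f (π i)))
  have hre : (∑ δ : Fin n → Bool,
        (cubeLpNorm n p fun ε => ∑ i : Fin n,
          sgn (δ i) • cubeDeriv n (π i) (f (π i)) ε) ^ p)
      = ∑ δ : Fin n → Bool,
        (cubeLpNorm n p fun ε => ∑ i : Fin n,
          sgn (δ i) • cubeDeriv n i (f i) ε) ^ p := by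
    refine Fintype.sum_bijective (fun δ : Fin n → Bool => δ ∘ ⇑π.symm)
      (Equiv.piCongrLeft' (fun _ : Fin n => Bool) π).bijective _ _ ?_
    intro δ
    congr 1
    congr 1
    funext ε
    rw [← Equiv.sum_comp π
      (fun j => sgn ((δ ∘ ⇑π.symm) j) • cubeDeriv n j (f j) ε)]
    refine Finset.sum_congr rfl fun i _ => ?_
    simp
  calc cubeLpNorm n p
        (fun ε => ∑ i : Fin n, Epi n π ((i : ℕ) + 1) (cubeDeriv n (π i) (f (π i))) ε)
      ≤ b * (((2 : ℝ) ^ n)⁻¹ * ∑ δ : Fin n → Bool,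
          (cubeLpNorm n p fun ε => ∑ i : Fin n,
            sgn (δ i) • Epi n π ((i : ℕ) + 1) (cubeDeriv n (π i) (f (π i))) ε) ^ p) ^ (1/p) := hU
    _ ≤ b * (s * (((2 : ℝ) ^ n)⁻¹ * ∑ δ : Fin n → Bool,
          (cubeLpNorm n p fun ε => ∑ i : Fin n,
            sgn (δ i) • cubeDeriv n (π i) (f (π i)) ε) ^ p) ^ (1/p)) :=
        mul_le_mul_of_nonneg_left hS hb.le
    _ = s * b * (((2 : ℝ) ^ n)⁻¹ * ∑ δ : Fin n → Bool,
          (cubeLpNorm n p fun ε =>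
            ∑ i : Fin n, sgn (δ i) • cubeDeriv n i (f i) ε) ^ p) ^ (1/p) := by
        rw [hre]; ring
end
end

section
/- Let X be a real Banach space, n a positive integer, and f_1,…,f_n : 𝒞_n → X. Then, averaging over all permutations π of {1,…,n}, one has the identity (1/n!) Σ_{π ∈ S_n} Σ_{i=1}^n 𝔈_i^π ∂_{π(i)} f_{π(i)} = Σ_{i=1}^n Δ^{−1}∂_i f_i. -/
/-!
In the Walsh basis both operations are diagonal: conditioning on the coordinates in `S` keeps
exactly the modes `w_A` with `A ⊆ S`, and `∂_j` keeps exactly the modes with `j ∈ A`. Hence the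
term of `π` and `i` retains the modes `A` whose last element in the order `π(1), π(2), …` is
`π(i)`. Left multiplication by a transposition shows that every `j ∈ A` is this last element
for the same number of permutations, namely `n! / |A|`, which produces the factor `|A|⁻¹`.
-/

noncomputable section

open Finset

variable {X : Type*} [NormedAddCommGroup X] [NormedSpace ℝ X]

lemma sgn_not (b : Bool) : sgn (!b) = -sgn b := by cases b <;> simp [sgn]

lemma one_add_sgn_mul_sgn (a b : Bool) : 1 + sgn a * sgn b = if a = b then 2 else 0 := by
  cases a <;> cases b <;> norm_num [sgn]

lemma sum_powerset_walsh_mul_walsh (n : ℕ) (S : Finset (Fin n)) (ε η : Fin n → Bool) :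
    ∑ A ∈ S.powerset, walsh n A ε * walsh n A η
      = if ∀ j ∈ S, η j = ε j then 2 ^ S.card else 0 := by
  simp_rw [walsh, ← prod_mul_distrib, ← prod_one_add, one_add_sgn_mul_sgn, prod_ite_zero,
    prod_const, eq_comm]

lemma cubeCondExp_eq_sum_walshCoeff (n : ℕ) (S : Finset (Fin n)) (f : (Fin n → Bool) → X)
    (ε : Fin n → Bool) :
    cubeCondExp n S f ε = ∑ A ∈ S.powerset, walsh n A ε • walshCoeff n f A := by
  have hS : S.card ≤ n := by simpa using S.card_le_univ
  calc cubeCondExp n S f ε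
      = ((2 : ℝ) ^ n)⁻¹ • ∑ η, (if ∀ j ∈ S, η j = ε j then (2 : ℝ) ^ S.card else 0) • f η := by
        simp_rw [ite_smul, zero_smul, ← sum_filter, ← smul_sum, smul_smul, cubeCondExp]
        congr 1
        rw [pow_sub₀ _ two_ne_zero hS, mul_inv, inv_inv]
    _ = ((2 : ℝ) ^ n)⁻¹ • ∑ η, (∑ A ∈ S.powerset, walsh n A ε * walsh n A η) • f η := by
        simp_rw [sum_powerset_walsh_mul_walsh]
    _ = ∑ A ∈ S.powerset, walsh n A ε • walshCoeff n f A := by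
        simp_rw [walshCoeff, sum_smul, smul_sum, mul_smul]
        rw [sum_comm]
        simp_rw [smul_comm ((2 : ℝ) ^ n)⁻¹]

lemma walsh_update_not (n : ℕ) (A : Finset (Fin n)) (j : Fin n) (ε : Fin n → Bool) :
    walsh n A (Function.update ε j (!ε j)) = (if j ∈ A then -1 else 1) * walsh n A ε := by
  simp_rw [walsh, Function.apply_update (fun _ => sgn)]
  split_ifs with hj
  · rw [prod_update_of_mem hj, prod_eq_mul_prod_sdiff_singleton_of_mem hj, sgn_not]
    ring
  · rw [prod_update_of_notMem hj, one_mul]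

lemma sum_walsh_smul_update_not (n : ℕ) (A : Finset (Fin n)) (j : Fin n)
    (F : (Fin n → Bool) → X) :
    ∑ ε, walsh n A ε • F (Function.update ε j (!ε j))
      = (if j ∈ A then -1 else 1 : ℝ) • ∑ ε, walsh n A ε • F ε := by
  have hflip : Function.Involutive fun ε : Fin n → Bool => Function.update ε j (!ε j) :=
    fun ε => by simp
  rw [← hflip.bijective.sum_comp]
  simp [walsh_update_not, smul_sum]

lemma walshCoeff_cubeDeriv (n : ℕ) (j : Fin n) (F : (Fin n → Bool) → X) (A : Finset (Fin n)) :
    walshCoeff n (cubeDeriv n j F) A = if j ∈ A then walshCoeff n F A else 0 := by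
  have hsum : ∑ ε, walsh n A ε • cubeDeriv n j F ε
      = (2 : ℝ)⁻¹ • (∑ ε, walsh n A ε • F ε
          - ∑ ε, walsh n A ε • F (Function.update ε j (!ε j))) := by
    simp only [cubeDeriv, smul_sub, sum_sub_distrib, smul_sum]
    simp_rw [smul_comm (walsh n A _)]
  rw [walshCoeff, hsum, sum_walsh_smul_update_not, walshCoeff]
  split_ifs <;> module

section PermCount

variable {α : Type*} [Fintype α] [LinearOrder α]

lemma card_filter_forall_le_eq_one {β : Type*} [LinearOrder β] {g : α → β}
    (hg : Function.Injective g) {A : Finset α} (hA : A.Nonempty) :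
    #{j ∈ A | ∀ a ∈ A, g a ≤ g j} = 1 := by
  obtain ⟨b, hb, hmax⟩ := A.exists_max_image g hA
  rw [card_eq_one]
  refine ⟨b, eq_singleton_iff_unique_mem.2 ⟨mem_filter.2 ⟨hb, hmax⟩, fun x hx => ?_⟩⟩
  obtain ⟨hxA, hx⟩ := mem_filter.1 hx
  exact hg (le_antisymm (hmax x hxA) (hx b hb))

lemma card_filter_perm_forall_le_le {A : Finset α} {j j' : α} (hj : j ∈ A) (hj' : j' ∈ A) :
    #{π : Equiv.Perm α | ∀ a ∈ A, π⁻¹ a ≤ π⁻¹ j}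
      ≤ #{π : Equiv.Perm α | ∀ a ∈ A, π⁻¹ a ≤ π⁻¹ j'} := by
  refine card_le_card_of_injOn (Equiv.swap j j' * ·) (fun π hπ => ?_)
    (mul_right_injective _).injOn
  have hswap : ∀ a ∈ A, Equiv.swap j j' a ∈ A := fun a ha => by
    rw [Equiv.swap_apply_def]
    split_ifs <;> assumption
  simp only [coe_filter, mem_univ, true_and, Set.mem_ofPred_eq] at hπ ⊢
  intro a ha
  simpa [mul_inv_rev, Equiv.swap_inv] using hπ _ (hswap a ha)

lemma card_filter_perm_forall_le_mul_card {A : Finset α} {j : α} (hj : j ∈ A) :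
    #{π : Equiv.Perm α | ∀ a ∈ A, π⁻¹ a ≤ π⁻¹ j} * #A = (Fintype.card α).factorial := by
  have hconst : ∀ j' ∈ A, #{π : Equiv.Perm α | ∀ a ∈ A, π⁻¹ a ≤ π⁻¹ j'}
      = #{π : Equiv.Perm α | ∀ a ∈ A, π⁻¹ a ≤ π⁻¹ j} := fun j' hj' =>
    le_antisymm (card_filter_perm_forall_le_le hj' hj) (card_filter_perm_forall_le_le hj hj')
  calc #{π : Equiv.Perm α | ∀ a ∈ A, π⁻¹ a ≤ π⁻¹ j} * #A
      = ∑ j' ∈ A, #{π : Equiv.Perm α | ∀ a ∈ A, π⁻¹ a ≤ π⁻¹ j'} := by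
        rw [sum_congr rfl hconst, sum_const, smul_eq_mul, mul_comm]
    _ = ∑ π : Equiv.Perm α, #{j' ∈ A | ∀ a ∈ A, π⁻¹ a ≤ π⁻¹ j'} :=
        sum_card_bipartiteAbove_eq_sum_card_bipartiteBelow _
    _ = (Fintype.card α).factorial := by
        simp [card_filter_forall_le_eq_one (Equiv.injective _) ⟨j, hj⟩, Fintype.card_perm]

lemma inv_factorial_mul_sum_perm_ite {A : Finset α} {j : α} (hj : j ∈ A) (c : ℝ) :
    ((Fintype.card α).factorial : ℝ)⁻¹ *
        ∑ π : Equiv.Perm α, (if ∀ a ∈ A, π⁻¹ a ≤ π⁻¹ j then c else 0)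
      = (#A : ℝ)⁻¹ * c := by
  have hcount := card_filter_perm_forall_le_mul_card hj
  have hpos := hcount ▸ (Fintype.card α).factorial_ne_zero
  have hA : (#A : ℝ) ≠ 0 := Nat.cast_ne_zero.2 (right_ne_zero_of_mul hpos)
  have hlast : (#{π : Equiv.Perm α | ∀ a ∈ A, π⁻¹ a ≤ π⁻¹ j} : ℝ) ≠ 0 :=
    Nat.cast_ne_zero.2 (left_ne_zero_of_mul hpos)
  rw [sum_ite, sum_const_zero, add_zero, sum_const, nsmul_eq_mul, ← hcount]
  push_cast
  field_simp

end PermCount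

lemma mem_image_firstIdx_succ_iff (n : ℕ) (π : Equiv.Perm (Fin n)) (i a : Fin n) :
    a ∈ (firstIdx n ((i : ℕ) + 1)).image π ↔ π⁻¹ a ≤ i := by
  simp only [mem_image, firstIdx, mem_filter, mem_univ, true_and, Fin.le_def, Nat.lt_succ_iff]
  exact ⟨fun ⟨k, hk, hka⟩ => hka ▸ by simpa using hk, fun h => ⟨π⁻¹ a, h, by simp⟩⟩

lemma Epi_succ_cubeDeriv (n : ℕ) (π : Equiv.Perm (Fin n)) (i j : Fin n)
    (F : (Fin n → Bool) → X) (ε : Fin n → Bool) :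
    Epi n π ((i : ℕ) + 1) (cubeDeriv n j F) ε
      = ∑ A ∈ univ.filter (fun A : Finset (Fin n) => j ∈ A),
          (if ∀ a ∈ A, π⁻¹ a ≤ i then walsh n A ε else 0) • walshCoeff n F A := by
  rw [Epi, cubeCondExp_eq_sum_walshCoeff, ← filter_subset_univ, sum_filter, sum_filter]
  refine sum_congr rfl fun A _ => ?_
  simp only [subset_iff, mem_image_firstIdx_succ_iff, walshCoeff_cubeDeriv]
  by_cases hj : j ∈ A <;> simp [hj]

lemma sum_Epi_succ_cubeDeriv (n : ℕ) (π : Equiv.Perm (Fin n)) (f : Fin n → (Fin n → Bool) → X)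
    (ε : Fin n → Bool) :
    ∑ i : Fin n, Epi n π ((i : ℕ) + 1) (cubeDeriv n (π i) (f (π i))) ε
      = ∑ j : Fin n, ∑ A ∈ univ.filter (fun A : Finset (Fin n) => j ∈ A),
          (if ∀ a ∈ A, π⁻¹ a ≤ π⁻¹ j then walsh n A ε else 0) • walshCoeff n (f j) A := by
  refine Eq.trans ?_ (Equiv.sum_comp π _)
  refine sum_congr rfl fun i _ => ?_
  rw [Epi_succ_cubeDeriv, show π⁻¹ (π i) = i from π.symm_apply_apply i]

theorem avg_perm_eq_invLapDeriv_general
    (X : Type*) [NormedAddCommGroup X] [NormedSpace ℝ X]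
    (n : ℕ) (f : Fin n → (Fin n → Bool) → X) (ε : Fin n → Bool) :
    ((n.factorial : ℝ))⁻¹ •
        ∑ π : Equiv.Perm (Fin n), ∑ i : Fin n,
          Epi n π ((i : ℕ) + 1) (cubeDeriv n (π i) (f (π i))) ε
      = ∑ i : Fin n, invLapDeriv n i (f i) ε := by
  simp_rw [sum_Epi_succ_cubeDeriv]
  rw [sum_comm, smul_sum]
  refine sum_congr rfl fun j _ => ?_
  rw [sum_comm, smul_sum, invLapDeriv]
  refine sum_congr rfl fun A hA => ?_
  rw [← sum_smul, smul_smul]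
  have hAvg := inv_factorial_mul_sum_perm_ite (mem_filter.1 hA).2 (walsh n A ε)
  rw [Fintype.card_fin] at hAvg
  -- the two sides decide `∀ a ∈ A, _` over `Fin n` by different instances
  convert congrArg (· • walshCoeff n (f j) A) hAvg

/-- Averaging the permuted martingale decomposition over all permutations yields the inverse
Laplacian: `(1/n!) Σ_{π ∈ Sₙ} Σᵢ 𝔈ᵢ^π ∂_{π(i)} f_{π(i)} = Σᵢ Δ⁻¹∂ᵢ fᵢ`. -/
theorem avg_perm_eq_invLapDeriv
    (X : Type*) [NormedAddCommGroup X] [NormedSpace ℝ X] [CompleteSpace X]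
    (n : ℕ) (hn : 0 < n) (f : Fin n → (Fin n → Bool) → X) (ε : Fin n → Bool) :
    ((n.factorial : ℝ))⁻¹ •
        ∑ π : Equiv.Perm (Fin n), ∑ i : Fin n,
          Epi n π ((i : ℕ) + 1) (cubeDeriv n (π i) (f (π i))) ε
      = ∑ i : Fin n, invLapDeriv n i (f i) ε :=
  avg_perm_eq_invLapDeriv_general X n f ε
end
end
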